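/- For all real ξ₁ ≠ ξ₂ and all real η₁, η₂, the transitional sine kernel converges in the Hermitian limit: lim_{σ̂ → 0⁺} π σ̂ · K_{σ̂}^S(π ξ₁ + i σ̂ η₁, π ξ₂ + i σ̂ η₂) = (e^{−(η₁² + η₂²)/2}/√π) · sin(π(ξ₁ − ξ₂))/(π(ξ₁ − ξ₂)). -/

import Mathlib

/-! With `η_j` scaled by `σ̂`, the Gaussian prefactor of `σ̂ K_σ̂^S` no longer depends on `σ̂`, so
the Hermitian limit is the value at `σ̂ = 0` of the remaining integral, which is continuous in
`σ̂` and in `ζ₁ - ζ₂`; at `σ̂ = 0` it is `∫₀¹ cos (t z) dt = sin z / z`. -/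

open MeasureTheory Complex Real Filter

/-- The transitional sine kernel `K_σ̂^S(ζ₁, ζ₂)`. -/
noncomputable def Ksine (σ : ℝ) (ζ₁ ζ₂ : ℂ) : ℂ :=
  ((Real.exp (-(ζ₁.im ^ 2 + ζ₂.im ^ 2) / (2 * σ ^ 2)) / (σ * π ^ ((3 : ℝ) / 2)) : ℝ) : ℂ) *
    ∫ t in (0 : ℝ)..1, ((Real.exp (-t ^ 2 * σ ^ 2) : ℝ) : ℂ) * Complex.cos ((t : ℂ) * (ζ₁ - ζ₂))

lemma Real.rpow_three_halves {x : ℝ} (hx : 0 ≤ x) : x ^ ((3 : ℝ) / 2) = x * √x := by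
  rw [Real.sqrt_eq_rpow, ← Real.rpow_one_add' hx (by norm_num)]
  norm_num

lemma integral_cos_mul_unitInterval {a : ℝ} (ha : a ≠ 0) :
    ∫ t in (0 : ℝ)..1, Real.cos (t * a) = Real.sin a / a := by
  simp [intervalIntegral.integral_comp_mul_right Real.cos ha, integral_cos, div_eq_inv_mul]

/-- The integral factor of `Ksine σ ζ₁ ζ₂`, as a function of `σ` and `z = ζ₁ - ζ₂`. -/
noncomputable def sineKernelIntegral (σ : ℝ) (z : ℂ) : ℂ :=
  ∫ t in (0 : ℝ)..1, ((Real.exp (-t ^ 2 * σ ^ 2) : ℝ) : ℂ) * Complex.cos ((t : ℂ) * z)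

lemma continuous_sineKernelIntegral :
    Continuous fun p : ℝ × ℂ => sineKernelIntegral p.1 p.2 := by
  apply intervalIntegral.continuous_parametric_intervalIntegral_of_continuous'
  exact (continuous_ofReal.comp (by fun_prop)).mul
    (Complex.continuous_cos.comp ((continuous_ofReal.comp continuous_snd).mul (by fun_prop)))

lemma sineKernelIntegral_zero_ofReal {a : ℝ} (ha : a ≠ 0) :
    sineKernelIntegral 0 a = ((Real.sin a / a : ℝ) : ℂ) := by
  have hcos (t : ℝ) : ((Real.exp (-t ^ 2 * (0 : ℝ) ^ 2) : ℝ) : ℂ) * Complex.cos ((t : ℂ) * a) =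
      ((Real.cos (t * a) : ℝ) : ℂ) := by
    simp
  rw [sineKernelIntegral, intervalIntegral.integral_congr fun t _ => hcos t,
    intervalIntegral.integral_ofReal, integral_cos_mul_unitInterval ha]

lemma ofReal_pi_mul_mul_Ksine {σ : ℝ} (hσ : σ ≠ 0) (x₁ x₂ η₁ η₂ : ℝ) :
    ((π * σ : ℝ) : ℂ) * Ksine σ (x₁ + I * ((σ * η₁ : ℝ) : ℂ)) (x₂ + I * ((σ * η₂ : ℝ) : ℂ)) =
      ((Real.exp (-(η₁ ^ 2 + η₂ ^ 2) / 2) / √π : ℝ) : ℂ) *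
        sineKernelIntegral σ ((x₁ + I * ((σ * η₁ : ℝ) : ℂ)) - (x₂ + I * ((σ * η₂ : ℝ) : ℂ))) := by
  have hprefactor : π * σ * (Real.exp (-((σ * η₁) ^ 2 + (σ * η₂) ^ 2) / (2 * σ ^ 2)) /
      (σ * π ^ ((3 : ℝ) / 2))) = Real.exp (-(η₁ ^ 2 + η₂ ^ 2) / 2) / √π := by
    have hsqrt : √π ≠ 0 := (Real.sqrt_pos.2 pi_pos).ne'
    rw [Real.rpow_three_halves pi_pos.le]
    field_simp
  simp only [Ksine, add_im, ofReal_im, mul_im, I_re, I_im, ofReal_re, zero_mul, one_mul,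
    zero_add]
  rw [← mul_assoc, ← ofReal_mul, hprefactor, sineKernelIntegral]

theorem sine_kernel_hermitian_limit (ξ₁ ξ₂ η₁ η₂ : ℝ) (hξ : ξ₁ ≠ ξ₂) :
    Tendsto (fun σ : ℝ =>
        ((π * σ : ℝ) : ℂ) *
          Ksine σ ((π * ξ₁ : ℝ) + Complex.I * ((σ * η₁ : ℝ) : ℂ))
            ((π * ξ₂ : ℝ) + Complex.I * ((σ * η₂ : ℝ) : ℂ)))
      (nhdsWithin 0 (Set.Ioi 0))
      (nhds (((Real.exp (-(η₁ ^ 2 + η₂ ^ 2) / 2) / Real.sqrt π *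
        (Real.sin (π * (ξ₁ - ξ₂)) / (π * (ξ₁ - ξ₂))) : ℝ)) : ℂ)) := by
  set ζ : ℝ → ℝ → ℝ → ℂ := fun σ ξ η => (π * ξ : ℝ) + I * ((σ * η : ℝ) : ℂ)
  have hζ₀ : ζ 0 ξ₁ η₁ - ζ 0 ξ₂ η₂ = ((π * (ξ₁ - ξ₂) : ℝ) : ℂ) := by
    simp only [ζ]; push_cast; ring
  have hcont : Continuous fun σ => sineKernelIntegral σ (ζ σ ξ₁ η₁ - ζ σ ξ₂ η₂) :=
    continuous_sineKernelIntegral.comp (continuous_id.prodMk (by fun_prop))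
  have hlim := ((hcont.tendsto 0).const_mul
    ((Real.exp (-(η₁ ^ 2 + η₂ ^ 2) / 2) / √π : ℝ) : ℂ)).mono_left
      (nhdsWithin_le_nhds (s := Set.Ioi 0))
  rw [hζ₀, sineKernelIntegral_zero_ofReal (mul_ne_zero pi_ne_zero (sub_ne_zero.2 hξ)),
    ← ofReal_mul] at hlim
  refine hlim.congr' ?_
  filter_upwards [self_mem_nhdsWithin] with σ hσ
  exact (ofReal_pi_mul_mul_Ksine (ne_of_gt hσ) _ _ η₁ η₂).symm
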